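/- arXiv:1511.03385 — 3 statements merged into one kernel-verified Lean document; each statement's English description precedes it below -/
import Mathlib

section
/- Let N = 2f_C+1, ẑ ∈ ℂ^N a fixed vector, and for ρ ∈ 𝕀^K let G_ρ ∈ ℂ^{N×K} have entries G_ρ[l,i] = ĝ[l]·e^{-i2πl·ρ[i]} (l ∈ 𝔽), with ĝ ∈ ℂ^N fixed. Suppose G_{ρ₀} has full column rank at ρ₀ ∈ 𝕀^K, and let β̃(ρ) = G_ρ†ẑ be the least-squares coefficient vector. Then β̃ is differentiable at ρ₀ and its Jacobian equals ∂β̃/∂ρ(ρ₀) = (G_{ρ₀}*G_{ρ₀})⁻¹·diag(G_{ρ₀}*L(I_N − P_{ρ₀})ẑ) − G_{ρ₀}†L*G_{ρ₀}·diag(β̃(ρ₀)), where P_{ρ₀} = G_{ρ₀}G_{ρ₀}† and L ∈ ℂ^{N×N} is diagonal with L[l,l] = i2πl. -/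
/-!
Where `G_ρ` has full column rank, `β̃(ρ)` is the unique solution of the normal equations
`M(ρ) β = G_ρ* ẑ` with `M(ρ) = G_ρ* G_ρ`. Cramer's rule expresses it through determinants of
matrices whose entries are smooth in `ρ`, so it is differentiable, and differentiating the normal
equations along `ρ₀ + s e_j` gives `M β̃' = G'* ẑ - (G'* G + G* G') β̃` with `G' = L* G E_jj`.
Since `G β̃ = P ẑ`, this is column `j` of the claimed Jacobian.
-/

open scoped Real BigOperators
open Matrix MeasureTheory Filter

noncomputable section

/-- Subtraction modulo one on the circle `𝕀 = [0,1)`. -/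
def wrapSub (a b : ℝ) : ℝ := Int.fract (a - b)

/-- Wraparound distance on `𝕀`. -/
def wrapDist (a b : ℝ) : ℝ := min (wrapSub a b) (wrapSub b a)

/-- The `L₂(𝕀)` inner product of two real signals. -/
def ipI (f g : ℝ → ℝ) : ℝ := ∫ t in (0:ℝ)..1, f t * g t

/-- The `L₂(𝕀)` norm of a real signal. -/
def l2normI (f : ℝ → ℝ) : ℝ := Real.sqrt (∫ t in (0:ℝ)..1, (f t)^2)

/-- The `L_∞(𝕀)` norm of a real signal. -/
def linfNormI (f : ℝ → ℝ) : ℝ := sSup ((fun t => |f t|) '' Set.Ico (0:ℝ) 1)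

/-- `e^{i2πθ}`. -/
def eI (θ : ℝ) : ℂ := Complex.exp (2 * (Real.pi : ℂ) * Complex.I * (θ : ℂ))

/-- Fourier coefficient `f̂[l] = ⟨f, e^{i2πlt}⟩` of a signal on `𝕀`. -/
def fourierCoeffI (f : ℝ → ℝ) (l : ℤ) : ℂ :=
  ∫ t in (0:ℝ)..1, (f t : ℂ) * eI (-(l * t))

/-- Hausdorff distance (w.r.t. the wraparound metric) between the entry sets of two vectors. -/
def hausdDist {K₁ K₂ : ℕ} (u : Fin K₁ → ℝ) (v : Fin K₂ → ℝ) : ℝ :=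
  max (⨆ i, ⨅ j, wrapDist (u i) (v j)) (⨆ j, ⨅ i, wrapDist (u i) (v j))

def rnorm2 {n : ℕ} (v : Fin n → ℝ) : ℝ := Real.sqrt (∑ i, (v i)^2)

def cnorm2 {n : ℕ} (v : Fin n → ℂ) : ℝ := Real.sqrt (∑ i, ‖v i‖^2)

def rnormInf {n : ℕ} (v : Fin n → ℝ) : ℝ := ⨆ i, |v i|

def cnormInf {n : ℕ} (v : Fin n → ℂ) : ℝ := ⨆ i, ‖v i‖

/-- Dynamic range `max_i |α i| / min_i |α i|`. -/
def dynRange {n : ℕ} (α : Fin n → ℝ) : ℝ := (⨆ i, |α i|) / (⨅ i, |α i|)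

/-- The frequency `l ∈ 𝔽 = [-f_C : f_C]` indexed by `Fin N`, `N = 2 f_C + 1`. -/
def freqIdx (N : ℕ) (l : Fin N) : ℤ := (l : ℤ) - ((N : ℤ) - 1) / 2

/-- The matrix `G_ρ[l,i] = ĝ[l]·e^{-i2πl·ρ[i]}`. -/
def Gmat (N K : ℕ) (ghat : ℤ → ℂ) (ρ : Fin K → ℝ) : Matrix (Fin N) (Fin K) ℂ :=
  Matrix.of fun l i => ghat (freqIdx N l) * eI (-((freqIdx N l : ℝ) * ρ i))

/-- The diagonal matrix with entries `L[l,l] = i2πl`. -/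
def Lmat (N : ℕ) : Matrix (Fin N) (Fin N) ℂ :=
  Matrix.diagonal fun l => 2 * (Real.pi : ℂ) * Complex.I * (freqIdx N l : ℂ)

/-- Moore–Penrose pseudo-inverse `A† = (Aᴴ A)⁻¹ Aᴴ` of a full-column-rank matrix. -/
def pinv {N K : ℕ} (A : Matrix (Fin N) (Fin K) ℂ) : Matrix (Fin K) (Fin N) ℂ :=
  (Aᴴ * A)⁻¹ * Aᴴ

/-- Orthogonal projection `P = A A†` onto the column span of `A`. -/
def Pmat {N K : ℕ} (A : Matrix (Fin N) (Fin K) ℂ) : Matrix (Fin N) (Fin N) ℂ :=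
  A * pinv A

/-- Spectral (ℓ₂ operator) norm of a complex matrix. -/
def specNorm {m n : ℕ} (A : Matrix (Fin m) (Fin n) ℂ) : ℝ :=
  ‖LinearMap.toContinuousLinearMap (Matrix.toEuclideanLin A)‖

/-- Spectral (ℓ₂ operator) norm of a real matrix. -/
def specNormR {m n : ℕ} (A : Matrix (Fin m) (Fin n) ℝ) : ℝ :=
  ‖LinearMap.toContinuousLinearMap (Matrix.toEuclideanLin A)‖

/-- Criterion 2 for the kernel `g = g_{σ,N}`, `σ = c/N`, with derivative `g'` and constants `C₀, κ`. -/
def Crit2 (N : ℕ) (c : ℝ) (g g' : ℝ → ℝ) (C₀ κ : ℝ) : Prop :=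
  ipI g g = 1 ∧
  (∀ t, HasDerivAt g (g' t) t) ∧
  (∀ l : ℤ, 2 * |l| > (N : ℤ) - 1 → fourierCoeffI g l = 0) ∧
  (∀ t ∈ Set.Ico (0:ℝ) 1, g t = g (1 - t)) ∧
  (∀ ρ₁ ∈ Set.Ico (0:ℝ) 1, ∀ ρ₂ ∈ Set.Ico (0:ℝ) 1, 2 * (c / N) ≤ wrapDist ρ₁ ρ₂ →
    |ipI (fun t => g (wrapSub t ρ₁)) (fun t => g (wrapSub t ρ₂))|
        ≤ C₀ * Real.exp (-(κ * c)) / (N * Real.sin (Real.pi * wrapDist ρ₁ ρ₂)) ∧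
    |ipI (fun t => g (wrapSub t ρ₁)) (fun t => g' (wrapSub t ρ₂))|
        ≤ C₀ * Real.exp (-(κ * c)) / Real.sin (Real.pi * wrapDist ρ₁ ρ₂) ∧
    |ipI (fun t => g' (wrapSub t ρ₁)) (fun t => g' (wrapSub t ρ₂))|
        ≤ C₀ * N * Real.exp (-(κ * c)) / Real.sin (Real.pi * wrapDist ρ₁ ρ₂))

/-- Criterion 3 for the kernel `g = g_{σ,N}`, `σ = c/N`, with flatness radius `h ≤ σ`
and constants `c₁', c₂', C'`. -/
def Crit3 (N : ℕ) (c : ℝ) (g g' : ℝ → ℝ) (h c₁' c₂' C' : ℝ) : Prop :=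
  h ≤ c / N ∧
  c₁' * (N:ℝ)^2 ≤ ipI g' g' ∧
  (∀ ρ₁ ∈ Set.Ico (0:ℝ) 1, ∀ ρ₂ ∈ Set.Ico (0:ℝ) 1, wrapDist ρ₁ ρ₂ ≤ h →
    1 - C' * (wrapDist ρ₁ ρ₂)^2 ≤ ipI (fun t => g (wrapSub t ρ₁)) (fun t => g (wrapSub t ρ₂)) ∧
    c₂' * (N:ℝ)^2 * wrapDist ρ₁ ρ₂
        ≤ |ipI (fun t => g (wrapSub t ρ₁)) (fun t => g' (wrapSub t ρ₂))| ∧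
    Real.sign (ipI (fun t => g (wrapSub t ρ₁)) (fun t => g' (wrapSub t ρ₂)))
        = Real.sign (wrapSub ρ₁ ρ₂ - 1/2))

/-- The claimed Jacobian `∂β̃/∂ρ = (GᴴG)⁻¹·diag(GᴴL(I−P)ẑ) − G†L*G·diag(β̃)` of the
least-squares coefficient map. -/
def JmatBt (N K : ℕ) (ghat : ℤ → ℂ) (zh : Fin N → ℂ) (ρ : Fin K → ℝ) :
    Matrix (Fin K) (Fin K) ℂ :=
  let G := Gmat N K ghat ρ
  (Gᴴ * G)⁻¹ *
      Matrix.diagonal ((Gᴴ * Lmat N * ((1 : Matrix (Fin N) (Fin N) ℂ) - Pmat G)) *ᵥ zh) -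
    pinv G * (Lmat N)ᴴ * G * Matrix.diagonal (pinv G *ᵥ zh)


section MatrixCalculus

variable {𝕜 𝕂 E : Type*} [NontriviallyNormedField 𝕜] [NormedField 𝕂] [NormedAlgebra 𝕜 𝕂]
  [NormedAddCommGroup E] [NormedSpace 𝕜 E] {n : Type*} [Fintype n]

theorem HasDerivAt.mulVec {M : 𝕜 → Matrix n n 𝕂} {M' : Matrix n n 𝕂} {v : 𝕜 → n → 𝕂}
    {v' : n → 𝕂} {s : 𝕜} (hM : ∀ i j, HasDerivAt (fun t => M t i j) (M' i j) s)
    (hv : HasDerivAt v v' s) :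
    HasDerivAt (fun t => M t *ᵥ v t) (M s *ᵥ v' + M' *ᵥ v s) s := by
  refine hasDerivAt_pi.mpr fun i => (HasDerivAt.fun_sum (u := Finset.univ)
    fun j _ => (hM i j).mul (hasDerivAt_pi.mp hv j)).congr_deriv ?_
  rw [Finset.sum_add_distrib, add_comm]
  rfl

variable [DecidableEq n]

theorem differentiableAt_det_of_entries {M : E → Matrix n n 𝕂} {x : E}
    (hM : ∀ i j, DifferentiableAt 𝕜 (fun y => M y i j) x) :
    DifferentiableAt 𝕜 (fun y => (M y).det) x := by
  simp only [det_apply]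
  fun_prop

theorem differentiableAt_inv_mulVec {M : E → Matrix n n 𝕂} {b : E → n → 𝕂} {x : E}
    (hM : ∀ i j, DifferentiableAt 𝕜 (fun y => M y i j) x)
    (hb : ∀ i, DifferentiableAt 𝕜 (fun y => b y i) x) (hdet : (M x).det ≠ 0) :
    DifferentiableAt 𝕜 (fun y => (M y)⁻¹ *ᵥ b y) x := by
  have hcramer : ∀ y, (M y)⁻¹ *ᵥ b y = (M y).det⁻¹ • (M y).cramer (b y) := fun y => by
    rw [inv_def, Ring.inverse_eq_inv', smul_mulVec, cramer_eq_adjugate_mulVec]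
  simp only [hcramer, differentiableAt_pi, Pi.smul_apply, smul_eq_mul, cramer_apply]
  refine fun i => ((differentiableAt_det_of_entries hM).inv hdet).mul
    (differentiableAt_det_of_entries fun k l => ?_)
  simp only [updateCol_apply]
  split_ifs
  exacts [hb k, hM k l]

theorem hasDerivAt_inv_mulVec {M : 𝕜 → Matrix n n 𝕂} {M' : Matrix n n 𝕂} {b : 𝕜 → n → 𝕂}
    {b' : n → 𝕂} {s : 𝕜} (hM : ∀ i j, HasDerivAt (fun t => M t i j) (M' i j) s)
    (hb : HasDerivAt b b' s) (hdet : (M s).det ≠ 0) :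
    HasDerivAt (fun t => (M t)⁻¹ *ᵥ b t) ((M s)⁻¹ *ᵥ (b' - M' *ᵥ ((M s)⁻¹ *ᵥ b s))) s := by
  obtain ⟨d, hd⟩ : ∃ d, HasDerivAt (fun t => (M t)⁻¹ *ᵥ b t) d s :=
    ⟨_, (differentiableAt_inv_mulVec (fun i j => (hM i j).differentiableAt)
      (fun i => (hasDerivAt_pi.mp hb i).differentiableAt) hdet).hasDerivAt⟩
  have hdet_near : ∀ᶠ t in nhds s, (M t).det ≠ 0 :=
    (differentiableAt_det_of_entries fun i j =>
      (hM i j).differentiableAt).continuousAt.eventually_ne hdet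
  have hsolves : (fun t => M t *ᵥ ((M t)⁻¹ *ᵥ b t)) =ᶠ[nhds s] b := by
    filter_upwards [hdet_near] with t ht
    rw [mulVec_mulVec, mul_nonsing_inv _ (isUnit_iff_ne_zero.mpr ht), one_mulVec]
  have hderiv : M s *ᵥ d + M' *ᵥ ((M s)⁻¹ *ᵥ b s) = b' :=
    (HasDerivAt.mulVec hM hd).unique (hsolves.hasDerivAt_iff.mpr hb)
  rwa [← hderiv, add_sub_cancel_right, mulVec_mulVec,
    nonsing_inv_mul _ (isUnit_iff_ne_zero.mpr hdet), one_mulVec]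

end MatrixCalculus

theorem det_ne_zero_of_rank_eq_card {R : Type*} [Field R] {n : Type*} [Fintype n] [DecidableEq n]
    (B : Matrix n n R) (h : B.rank = Fintype.card n) : B.det ≠ 0 := by
  rw [← isUnit_iff_ne_zero, ← isUnit_iff_isUnit_det, ← mulVec_surjective_iff_isUnit]
  have hrange : LinearMap.range B.mulVecLin = ⊤ :=
    Submodule.eq_top_of_finrank_eq (h.trans (Module.finrank_fintype_fun_eq_card R).symm)
  exact LinearMap.range_eq_top.mp hrange

open scoped ComplexOrder in
theorem det_conjTranspose_mul_self_ne_zero {𝕜 : Type*} [RCLike 𝕜] {m n : Type*} [Fintype m]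
    [Fintype n] [DecidableEq n] (A : Matrix m n 𝕜) (h : A.rank = Fintype.card n) :
    (Aᴴ * A).det ≠ 0 :=
  det_ne_zero_of_rank_eq_card _ ((rank_conjTranspose_mul_self A).trans h)

section PseudoInverse

variable {N K : ℕ}

def pinvMulVecDeriv (A A' : Matrix (Fin N) (Fin K) ℂ) (z : Fin N → ℂ) : Fin K → ℂ :=
  (Aᴴ * A)⁻¹ *ᵥ (A'ᴴ *ᵥ z - (A'ᴴ * A + Aᴴ * A') *ᵥ (pinv A *ᵥ z))

theorem differentiableAt_pinv_mulVec {E : Type*} [NormedAddCommGroup E] [NormedSpace ℝ E]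
    {A : E → Matrix (Fin N) (Fin K) ℂ} {x : E}
    (hA : ∀ l i, DifferentiableAt ℝ (fun y => A y l i) x) (hdet : ((A x)ᴴ * A x).det ≠ 0)
    (z : Fin N → ℂ) : DifferentiableAt ℝ (fun y => pinv (A y) *ᵥ z) x := by
  simp only [pinv, ← mulVec_mulVec]
  refine differentiableAt_inv_mulVec (fun p q => ?_) (fun p => ?_) hdet
  · simp only [mul_apply, conjTranspose_apply]
    exact DifferentiableAt.fun_sum fun l _ => (hA l p).star.mul (hA l q)
  · simp only [mulVec, dotProduct, conjTranspose_apply]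
    exact DifferentiableAt.fun_sum fun l _ => (hA l p).star.mul_const (z l)

theorem hasDerivAt_pinv_mulVec {A : ℝ → Matrix (Fin N) (Fin K) ℂ} {A' : Matrix (Fin N) (Fin K) ℂ}
    {s : ℝ} (hA : ∀ l i, HasDerivAt (fun t => A t l i) (A' l i) s)
    (hdet : ((A s)ᴴ * A s).det ≠ 0) (z : Fin N → ℂ) :
    HasDerivAt (fun t => pinv (A t) *ᵥ z) (pinvMulVecDeriv (A s) A' z) s := by
  have hM : ∀ p q,
      HasDerivAt (fun t => ((A t)ᴴ * A t) p q) ((A'ᴴ * A s + (A s)ᴴ * A') p q) s := by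
    intro p q
    simp only [mul_apply, conjTranspose_apply, Matrix.add_apply, ← Finset.sum_add_distrib]
    exact HasDerivAt.fun_sum fun l _ => (hA l p).star.mul (hA l q)
  have hb : HasDerivAt (fun t => (A t)ᴴ *ᵥ z) (A'ᴴ *ᵥ z) s := by
    refine hasDerivAt_pi.mpr fun p => ?_
    simp only [mulVec, dotProduct, conjTranspose_apply]
    exact HasDerivAt.fun_sum fun l _ => (hA l p).star.mul_const (z l)
  simp only [pinv, pinvMulVecDeriv, ← mulVec_mulVec]
  exact hasDerivAt_inv_mulVec hM hb hdet

theorem single_one_mulVec {α n : Type*} [NonAssocSemiring α] [Fintype n] [DecidableEq n] (j : n)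
    (v : n → α) : single j j (1 : α) *ᵥ v = Pi.single j (v j) := by
  rw [single_mulVec, one_mul]
  rfl

theorem pinvMulVecDeriv_mul_single (A : Matrix (Fin N) (Fin K) ℂ) (L : Matrix (Fin N) (Fin N) ℂ)
    (z : Fin N → ℂ) (j : Fin K) :
    pinvMulVecDeriv A (Lᴴ * A * single j j (1 : ℂ)) z = fun i =>
      ((Aᴴ * A)⁻¹ * diagonal ((Aᴴ * L * (1 - Pmat A)) *ᵥ z) -
        pinv A * Lᴴ * A * diagonal (pinv A *ᵥ z) : Matrix (Fin K) (Fin K) ℂ) i j := by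
  have hsingle : (single j j (1 : ℂ))ᴴ = single j j 1 := by
    rw [conjTranspose_single, star_one]
  -- `A *ᵥ (pinv A *ᵥ z) = Pmat A *ᵥ z` turns the `A'ᴴ * A` term into the projection term
  have hsplit : (Lᴴ * A * single j j (1 : ℂ))ᴴ *ᵥ z
      - ((Lᴴ * A * single j j (1 : ℂ))ᴴ * A + Aᴴ * (Lᴴ * A * single j j (1 : ℂ))) *ᵥ (pinv A *ᵥ z)
      = Pi.single j (((Aᴴ * L * (1 - Pmat A)) *ᵥ z) j)
        - (Aᴴ * Lᴴ * A) *ᵥ Pi.single j ((pinv A *ᵥ z) j) := by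
    simp only [conjTranspose_mul, conjTranspose_conjTranspose, hsingle, Pmat, add_mulVec,
      sub_mulVec, one_mulVec, mulVec_sub, ← mulVec_mulVec, single_one_mulVec, Pi.sub_apply,
      Pi.single_sub]
    abel
  funext i
  rw [pinvMulVecDeriv, hsplit, mulVec_sub, mulVec_mulVec, Matrix.sub_apply, mul_diagonal,
    mul_diagonal, mulVec_single, mulVec_single, pinv]
  simp only [Pi.sub_apply, Pi.smul_apply, op_smul_eq_mul, col_apply, Matrix.mul_assoc]

end PseudoInverse

theorem HasDerivAt.eI {f : ℝ → ℝ} {f' x : ℝ} (hf : HasDerivAt f f' x) :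
    HasDerivAt (fun t => eI (f t)) (2 * π * Complex.I * f' * eI (f x)) x := by
  unfold _root_.eI
  convert (hf.ofReal_comp.const_mul (2 * (π : ℂ) * Complex.I)).cexp using 1
  ring

theorem differentiableAt_Gmat_apply (N K : ℕ) (ghat : ℤ → ℂ) (ρ₀ : EuclideanSpace ℝ (Fin K))
    (l : Fin N) (i : Fin K) :
    DifferentiableAt ℝ (fun ρ : EuclideanSpace ℝ (Fin K) => Gmat N K ghat (fun i => ρ i) l i)
      ρ₀ := by
  simp only [Gmat, of_apply, eI]
  fun_prop

theorem hasDerivAt_Gmat_apply_line (N K : ℕ) (ghat : ℤ → ℂ) (ρ₀ : EuclideanSpace ℝ (Fin K))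
    (j : Fin K) (l : Fin N) (i : Fin K) :
    HasDerivAt
      (fun s : ℝ => Gmat N K ghat (fun i => (ρ₀ + s • EuclideanSpace.single j (1 : ℝ)) i) l i)
      (((Lmat N)ᴴ * Gmat N K ghat (fun i => ρ₀ i) * single j j (1 : ℂ)) l i) 0 := by
  have hphase : HasDerivAt
      (fun s : ℝ => -((freqIdx N l : ℝ) * (ρ₀ + s • EuclideanSpace.single j (1 : ℝ)) i))
      (-((freqIdx N l : ℝ) * if i = j then 1 else 0)) 0 := by
    simp only [PiLp.add_apply, PiLp.smul_apply, PiLp.single_apply, smul_eq_mul]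
    exact ((((hasDerivAt_id (0 : ℝ)).mul_const _).const_add (ρ₀ i)).const_mul _).neg.congr_deriv
      (by simp)
  refine (hphase.eI.const_mul (ghat (freqIdx N l))).congr_deriv ?_
  rcases eq_or_ne i j with rfl | hij
  · simp [Lmat, Gmat, mul_single_apply_same, diagonal_conjTranspose, diagonal_mul]
    ring
  · simp [mul_single_apply_of_ne _ _ _ _ _ hij, hij]

/-- explicit formula for the Jacobian of the least-squares coefficients
`β̃(ρ) = G_ρ†ẑ`. -/
theorem stmt17
    (fC K : ℕ) (ghat : ℤ → ℂ) (zhat : Fin (2*fC+1) → ℂ)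
    (ρ₀ : EuclideanSpace ℝ (Fin K))
    (hrank : (Gmat (2*fC+1) K ghat (fun i => ρ₀ i)).rank = K) :
    DifferentiableAt ℝ
      (fun ρ : EuclideanSpace ℝ (Fin K) =>
        pinv (Gmat (2*fC+1) K ghat (fun i => ρ i)) *ᵥ zhat) ρ₀ ∧
    ∀ j : Fin K,
      HasDerivAt
        (fun s : ℝ =>
          pinv (Gmat (2*fC+1) K ghat
            (fun i => (ρ₀ + s • EuclideanSpace.single j (1:ℝ)) i)) *ᵥ zhat)
        (fun i => JmatBt (2*fC+1) K ghat zhat (fun i' => ρ₀ i') i j)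
        0 := by
  have hdet : ((Gmat (2*fC+1) K ghat (fun i => ρ₀ i))ᴴ *
      Gmat (2*fC+1) K ghat (fun i => ρ₀ i)).det ≠ 0 :=
    det_conjTranspose_mul_self_ne_zero _ (hrank.trans (Fintype.card_fin K).symm)
  refine ⟨differentiableAt_pinv_mulVec (differentiableAt_Gmat_apply _ K ghat ρ₀) hdet zhat,
    fun j => ?_⟩
  have hderiv := hasDerivAt_pinv_mulVec (hasDerivAt_Gmat_apply_line _ K ghat ρ₀ j)
    (by simpa only [zero_smul, add_zero] using hdet) zhat
  simp only [zero_smul, add_zero, pinvMulVecDeriv_mul_single] at hderiv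
  exact hderiv
end
end

section
/- For every σ ∈ (0, 1/2), the sum over positive integers i with i·σ ≤ 1/2 satisfies Σ_{0 < iσ ≤ 1/2} 1/sin(πiσ) ≤ 1/sin(πσ) + √(cot(πσ)) / (σ·√(2π)). In particular, if σ = c/N with c = c(N) = o(N), then there is a constant C such that Σ_{0 < iσ ≤ 1/2} 1/sin(πiσ) ≤ C·(N/c)^{3/2} for all sufficiently large N. -/
/-!
Split off the term `i = 1` and let `M = ⌊1/(2σ)⌋`. By Cauchy–Schwarz the square of the sum of
the remaining `M - 1` terms is at most `(M - 1) ∑ 1/sin²(πiσ)`. In place of the comparison with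
`∫ dt / sin²(πt)`, this sum of squares telescopes: for `0 < a < b ≤ π/2`,
`1/sin² b ≤ 1/(sin a sin b) = (cot a - cot b)/sin(b - a)`, so it is at most `cot(πσ)/sin(πσ)`.
Finally `sin x ≥ x - x³/6` gives `(M - 1)/sin(πσ) ≤ 1/(2πσ²)`.

For the asymptotic bound, `σ = c/N < 1/2` eventually, and Jordan's inequality `sin(πσ) ≥ 2σ`
bounds each of the two terms by `σ^(-3/2)/2`.
-/

open Filter Finset Real

lemma cot_nonneg_of_mem_Icc {x : ℝ} (hx : x ∈ Set.Icc 0 (π / 2)) : 0 ≤ cot x := by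
  rw [cot_eq_cos_div_sin]
  exact div_nonneg (cos_nonneg_of_mem_Icc ⟨by linarith [hx.1, pi_pos], hx.2⟩)
    (sin_nonneg_of_nonneg_of_le_pi hx.1 (by linarith [hx.2, pi_pos]))

lemma cot_sub_cot {a b : ℝ} (ha : sin a ≠ 0) (hb : sin b ≠ 0) :
    cot a - cot b = sin (b - a) / (sin a * sin b) := by
  rw [cot_eq_cos_div_sin, cot_eq_cos_div_sin, div_sub_div _ _ ha hb, sin_sub]
  ring

lemma inv_sin_sq_le_cot_sub_cot_div {a b : ℝ} (ha : 0 < a) (hab : a < b) (hb : b ≤ π / 2) :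
    (sin b)⁻¹ ^ 2 ≤ (cot a - cot b) / sin (b - a) := by
  have hsa : 0 < sin a := sin_pos_of_pos_of_lt_pi ha (by linarith [pi_pos])
  have hsb : 0 < sin b := sin_pos_of_pos_of_lt_pi (ha.trans hab) (by linarith [pi_pos])
  have hsba : 0 < sin (b - a) := sin_pos_of_pos_of_lt_pi (by linarith) (by linarith [pi_pos])
  rw [cot_sub_cot hsa.ne' hsb.ne', div_div_cancel_left' hsba.ne', inv_pow, sq]
  gcongr
  exact sin_le_sin_of_le_of_le_pi_div_two (by linarith [pi_pos]) hb hab.le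

lemma sum_Ioc_inv_sin_sq_le {θ : ℝ} (hθ : 0 < θ) {M : ℕ} (hM1 : 1 ≤ M) (hM : M * θ ≤ π / 2) :
    ∑ i ∈ Ioc 1 M, (sin (i * θ))⁻¹ ^ 2 ≤ (cot θ - cot (M * θ)) / sin θ := by
  induction M, hM1 using Nat.le_induction with
  | base => simp
  | succ M hM1 ih =>
    push_cast at hM ⊢
    have hMθ : M * θ ≤ π / 2 := by nlinarith
    have hstep := inv_sin_sq_le_cot_sub_cot_div (a := M * θ) (b := (M + 1) * θ)
      (by positivity) (by nlinarith) hM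
    rw [show (M + 1 : ℝ) * θ - M * θ = θ by ring] at hstep
    rw [sum_Ioc_succ_top hM1]
    push_cast
    calc _ ≤ (cot θ - cot (M * θ)) / sin θ + (cot (M * θ) - cot ((M + 1) * θ)) / sin θ :=
          add_le_add (ih hMθ) hstep
      _ = _ := by ring

lemma mul_one_sub_le_sin {x : ℝ} (hx0 : 0 ≤ x) (hx : x ≤ π / 2) :
    x * (1 - 2 / π * x) ≤ sin x := by
  have hπ := pi_pos
  have hcube : x ^ 3 / 6 ≤ 2 / π * x ^ 2 := by
    rw [div_mul_eq_mul_div, le_div_iff₀ hπ]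
    nlinarith [pi_lt_d2, mul_nonneg (sq_nonneg x) hx0]
  nlinarith [sin_ge_sub_cube hx0]

lemma sub_one_mul_le_sin_pi_mul {σ : ℝ} (hσ : 0 < σ) {M : ℕ} (hM1 : 1 ≤ M)
    (hM : (M : ℝ) ≤ 1 / (2 * σ)) : ((M : ℝ) - 1) * (2 * π * σ ^ 2) ≤ sin (π * σ) := by
  have hM2σ : (M : ℝ) * (2 * σ) ≤ 1 := by rwa [le_div_iff₀ (by positivity)] at hM
  have hσ2 : σ ≤ 1 / 2 := by
    have : (1 : ℝ) ≤ M := by exact_mod_cast hM1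
    nlinarith
  refine le_trans ?_ (mul_one_sub_le_sin (by positivity) (by nlinarith [pi_pos]))
  rw [show 2 / π * (π * σ) = 2 * σ by field_simp]
  nlinarith [mul_le_mul_of_nonneg_left hM2σ (by positivity : 0 ≤ π * σ)]

lemma sum_Ioc_inv_sin_le {σ : ℝ} (hσ : 0 < σ) {M : ℕ} (hM1 : 1 ≤ M)
    (hM : (M : ℝ) ≤ 1 / (2 * σ)) :
    ∑ i ∈ Ioc 1 M, (sin (π * i * σ))⁻¹ ≤ √(cot (π * σ)) / (σ * √(2 * π)) := by
  have hπ := pi_pos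
  set θ := π * σ with hθ_def
  have hθ : 0 < θ := by positivity
  have hMθ : M * θ ≤ π / 2 := by
    calc (M : ℝ) * θ ≤ 1 / (2 * σ) * θ := by gcongr
      _ = π / 2 := by rw [hθ_def]; field_simp
  have hiθ : ∀ i ∈ Ioc 1 M, (i : ℝ) * θ ∈ Set.Icc 0 (π / 2) := fun i hi =>
    ⟨by positivity, le_trans (by gcongr; exact_mod_cast (mem_Ioc.1 hi).2) hMθ⟩
  have hM1' : (1 : ℝ) ≤ M := by exact_mod_cast hM1
  have hθ2 : θ ≤ π / 2 := by nlinarith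
  have hsinθ : 0 < sin θ := sin_pos_of_pos_of_lt_pi hθ (by linarith)
  have hcot : 0 ≤ cot θ := cot_nonneg_of_mem_Icc ⟨hθ.le, hθ2⟩
  simp only [show ∀ i : ℕ, π * i * σ = i * θ from fun i => by ring]
  clear_value θ
  set S := ∑ i ∈ Ioc 1 M, (sin (i * θ))⁻¹
  have hsq : ∑ i ∈ Ioc 1 M, (sin (i * θ))⁻¹ ^ 2 ≤ cot θ / sin θ := by
    refine (sum_Ioc_inv_sin_sq_le hθ hM1 hMθ).trans ?_
    gcongr
    exact sub_le_self _ (cot_nonneg_of_mem_Icc ⟨by positivity, hMθ⟩)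
  have hS : S ^ 2 * (2 * π * σ ^ 2) ≤ cot θ :=
    calc _ ≤ #(Ioc 1 M) * (∑ i ∈ Ioc 1 M, (sin (i * θ))⁻¹ ^ 2) * (2 * π * σ ^ 2) := by
          gcongr; exact sq_sum_le_card_mul_sum_sq
      _ ≤ ((M : ℝ) - 1) * (2 * π * σ ^ 2) * (cot θ / sin θ) := by
          rw [Nat.card_Ioc, Nat.cast_sub hM1, Nat.cast_one, mul_right_comm]
          exact mul_le_mul_of_nonneg_left hsq (mul_nonneg (by linarith) (by positivity))
      _ ≤ sin θ * (cot θ / sin θ) := by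
          refine mul_le_mul_of_nonneg_right ?_ (div_nonneg hcot hsinθ.le)
          exact hθ_def ▸ sub_one_mul_le_sin_pi_mul hσ hM1 hM
      _ = cot θ := mul_div_cancel₀ _ hsinθ.ne'
  have hS0 : 0 ≤ S := sum_nonneg fun i hi =>
    inv_nonneg.2 (sin_nonneg_of_nonneg_of_le_pi (hiθ i hi).1 (by linarith [(hiθ i hi).2]))
  rw [le_div_iff₀ (by positivity), Real.le_sqrt (mul_nonneg hS0 (by positivity)) hcot,
    mul_pow, mul_pow, sq_sqrt (by positivity)]
  linarith

lemma sum_Icc_floor_inv_sin_le {σ : ℝ} (hσ : σ ∈ Set.Ioo 0 (1 / 2)) :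
    ∑ i ∈ Icc 1 ⌊1 / (2 * σ)⌋₊, (sin (π * i * σ))⁻¹
      ≤ (sin (π * σ))⁻¹ + √(cot (π * σ)) / (σ * √(2 * π)) := by
  have hM1 : 1 ≤ ⌊1 / (2 * σ)⌋₊ := by
    rw [Nat.one_le_floor_iff, le_div_iff₀ (by linarith [hσ.1])]
    linarith [hσ.2]
  rw [← sum_Ioc_add_eq_sum_Icc hM1, add_comm, Nat.cast_one, mul_one]
  gcongr
  exact sum_Ioc_inv_sin_le hσ.1 hM1 (Nat.floor_le (by have := hσ.1; positivity))

lemma inv_sin_add_sqrt_cot_div_le_rpow {σ : ℝ} (hσ0 : 0 < σ) (hσ : σ ≤ 1 / 2) :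
    (sin (π * σ))⁻¹ + √(cot (π * σ)) / (σ * √(2 * π)) ≤ σ⁻¹ ^ (3 / 2 : ℝ) := by
  have hπ := pi_pos
  have hsin : 2 * σ ≤ sin (π * σ) := by
    have := mul_le_sin (x := π * σ) (by positivity) (by nlinarith)
    rwa [show 2 / π * (π * σ) = 2 * σ by field_simp] at this
  have hsin_inv : (sin (π * σ))⁻¹ ≤ (2 * σ)⁻¹ := inv_anti₀ (by positivity) hsin
  have hcot : cot (π * σ) ≤ (2 * σ)⁻¹ := by
    rw [cot_eq_cos_div_sin, div_eq_mul_inv]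
    exact (mul_le_of_le_one_left (inv_nonneg.2 (by linarith)) (cos_le_one _)).trans hsin_inv
  have hsqrt : √σ ≤ 1 := sqrt_le_one.mpr (by linarith)
  rw [inv_rpow hσ0.le, show (3 / 2 : ℝ) = 1 + 1 / 2 by norm_num, rpow_add hσ0, rpow_one,
    ← sqrt_eq_rpow]
  have hterm1 : (sin (π * σ))⁻¹ ≤ (2 * σ * √σ)⁻¹ :=
    hsin_inv.trans (inv_anti₀ (by positivity) (by nlinarith))
  have hterm2 : √(cot (π * σ)) / (σ * √(2 * π)) ≤ (2 * σ * √σ)⁻¹ := by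
    have hcot0 : 0 ≤ cot (π * σ) := cot_nonneg_of_mem_Icc ⟨by positivity, by nlinarith⟩
    have key : √(cot (π * σ)) * (2 * √σ) ≤ √(2 * π) := by
      rw [Real.le_sqrt (by positivity) (by positivity), mul_pow, mul_pow, sq_sqrt hcot0,
        sq_sqrt hσ0.le]
      have : cot (π * σ) * (2 * σ) ≤ 1 := by
        calc _ ≤ (2 * σ)⁻¹ * (2 * σ) := by gcongr
          _ = 1 := inv_mul_cancel₀ (by positivity)
      nlinarith [pi_gt_three]
    rw [div_le_iff₀ (by positivity), inv_mul_eq_div, le_div_iff₀ (by positivity)]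
    nlinarith [mul_le_mul_of_nonneg_left key hσ0.le]
  calc _ ≤ (2 * σ * √σ)⁻¹ + (2 * σ * √σ)⁻¹ := add_le_add hterm1 hterm2
    _ = (σ * √σ)⁻¹ := by field_simp; ring

/-- the elementary sum estimate `Σ 1/sin(πiσ) ≲ (N/c)^{3/2}`. -/
theorem stmt18 :
    (∀ σ : ℝ, σ ∈ Set.Ioo (0:ℝ) (1/2) →
      ∑ i ∈ Finset.Icc 1 ⌊1/(2*σ)⌋₊, 1 / Real.sin (Real.pi * i * σ)
        ≤ 1 / Real.sin (Real.pi * σ) +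
            Real.sqrt (Real.cos (Real.pi * σ) / Real.sin (Real.pi * σ)) /
              (σ * Real.sqrt (2 * Real.pi))) ∧
    (∀ c : ℕ → ℝ, (∀ N, 0 < c N) →
      Tendsto (fun N : ℕ => c N / N) atTop (nhds 0) →
      ∃ C : ℝ, 0 < C ∧ ∃ N₀ : ℕ, ∀ N : ℕ, N₀ ≤ N →
        ∑ i ∈ Finset.Icc 1 ⌊1/(2*(c N / N))⌋₊, 1 / Real.sin (Real.pi * i * (c N / N))
          ≤ C * ((N : ℝ) / c N) ^ ((3:ℝ)/2)) := by
  refine ⟨fun σ hσ => ?_, fun c hc hlim => ⟨1, one_pos, ?_⟩⟩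
  · simpa only [one_div, cot_eq_cos_div_sin] using sum_Icc_floor_inv_sin_le hσ
  · obtain ⟨N₀, hN₀⟩ := eventually_atTop.1
      ((hlim.eventually_lt_const (by norm_num : (0 : ℝ) < 1 / 2)).and (eventually_ge_atTop 1))
    refine ⟨N₀, fun N hN => ?_⟩
    obtain ⟨hhalf, hN1⟩ := hN₀ N hN
    have hσ : 0 < c N / N := div_pos (hc N) (by exact_mod_cast hN1)
    rw [one_mul]
    simpa only [one_div, inv_div] using (sum_Icc_floor_inv_sin_le ⟨hσ, hhalf⟩).trans
      (inv_sin_add_sqrt_cot_div_le_rpow hσ hhalf.le)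
end

section
/- Let N = 2f_C+1, c = c(N) > 0, σ = c/N < 1/2, and suppose the kernel g_{σ,N} satisfies the decay bound |g_{σ,N}(t)| ≤ C₀·e^{-κc}/(√N·sin(πt)) for all σ ≤ t ≤ 1/2, together with g_{σ,N}(t) = g_{σ,N}(1−t). Let τ ∈ 𝕀^K satisfy sep(τ) ≥ 2σ and let α ∈ ℝ^K. Then there exist constants 0 < a ≤ b and C, C' > 0 such that for every c with a·log N ≤ c ≤ b·log N, all sufficiently large N, and every t ∈ 𝕀 with min_{i} d(t, τ[i]) ≥ σ: |Σ_{i=1}^K α[i]·g_{σ,N}(t⊖τ[i])| ≤ ‖α‖_∞ · C·N·e^{-C'c}, and in particular this bound can be made at most ‖α‖_∞·e^{-C''c} for a constant C'' > 0 when the lower bound a is large enough. -/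
open scoped Real BigOperators
open Matrix MeasureTheory Filter

noncomputable section

/-! A term `α i · g (t ⊖ τ i)` with `d(t, τ i) ≥ σ` is bounded by folding `t ⊖ τ i` into
`[σ, 1/2]` with the symmetry `g t = g (1 - t)` and applying Jordan's inequality `sin (π σ) ≥ 2σ`:
it is at most `‖α‖_∞ C₀ e^{-κc} √N / (2c)`. Summing the `K` terms and taking `c ≥ log N / κ ≥ 1`
gives `‖α‖_∞ K C₀ √N e^{-κc}`; since `e^{κc} ≥ N` and, for large `N`, `K C₀ ≤ N^{1/4}`, this is
at most `‖α‖_∞ e^{-κc/4}`. -/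

open Real

theorem wrapSub_swap {t s : ℝ} (h : wrapSub t s ≠ 0) : wrapSub s t = 1 - wrapSub t s := by
  unfold wrapSub at *
  rw [← neg_sub, Int.fract_neg h]

theorem le_wrapSub_of_le_wrapDist {t s σ : ℝ} (hσ : 0 < σ) (h : σ ≤ wrapDist t s) :
    σ ≤ wrapSub t s ∧ σ ≤ 1 - wrapSub t s := by
  have hne : wrapSub t s ≠ 0 := fun h0 => by
    have := h.trans (min_le_left _ _)
    linarith
  rw [wrapDist, wrapSub_swap hne] at h
  exact le_min_iff.1 h

theorem two_mul_le_sin_pi_mul {x : ℝ} (h0 : 0 ≤ x) (h1 : x ≤ 1 / 2) : 2 * x ≤ sin (π * x) := by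
  have h := mul_le_sin (x := π * x) (by positivity) (by nlinarith [pi_pos])
  rwa [← mul_assoc, div_mul_cancel₀ _ pi_ne_zero] at h

theorem sin_pi_mul_le_sin_pi_mul {x y : ℝ} (h0 : 0 ≤ x) (hxy : x ≤ y) (hy : y ≤ 1 / 2) :
    sin (π * x) ≤ sin (π * y) :=
  strictMonoOn_sin.monotoneOn ⟨by nlinarith [pi_pos], by nlinarith [pi_pos]⟩
    ⟨by nlinarith [pi_pos], by nlinarith [pi_pos]⟩ (by nlinarith [pi_pos])

theorem abs_apply_wrapSub_le_of_symm {f : ℝ → ℝ} {σ A : ℝ} (hσ : 0 < σ) (hA : 0 ≤ A)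
    (hdecay : ∀ x, σ ≤ x → x ≤ 1 / 2 → |f x| ≤ A / sin (π * x))
    (hsymm : ∀ x ∈ Set.Ico (0:ℝ) 1, f x = f (1 - x))
    {t s : ℝ} (hts : σ ≤ wrapDist t s) : |f (wrapSub t s)| ≤ A / (2 * σ) := by
  have hhalf : ∀ x, σ ≤ x → x ≤ 1 / 2 → |f x| ≤ A / (2 * σ) := fun x hσx hx =>
    calc |f x| ≤ A / sin (π * x) := hdecay x hσx hx
      _ ≤ A / (2 * σ) := by
        gcongr
        exact (two_mul_le_sin_pi_mul hσ.le (hσx.trans hx)).trans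
          (sin_pi_mul_le_sin_pi_mul hσ.le hσx hx)
  obtain ⟨hσx, hσx'⟩ := le_wrapSub_of_le_wrapDist hσ hts
  by_cases hx : wrapSub t s ≤ 1 / 2
  · exact hhalf _ hσx hx
  · rw [hsymm (wrapSub t s) ⟨Int.fract_nonneg _, Int.fract_lt_one _⟩]
    exact hhalf _ hσx' (by linarith)

theorem abs_le_rnormInf {n : ℕ} (α : Fin n → ℝ) (i : Fin n) : |α i| ≤ rnormInf α :=
  le_ciSup (f := fun j => |α j|) (Set.finite_range _).bddAbove i

theorem rnormInf_nonneg {n : ℕ} (α : Fin n → ℝ) : 0 ≤ rnormInf α :=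
  Real.iSup_nonneg fun i => abs_nonneg (α i)

theorem abs_sum_mul_le_rnormInf_mul {n : ℕ} (α y : Fin n → ℝ) {B : ℝ} (hy : ∀ i, |y i| ≤ B) :
    |∑ i, α i * y i| ≤ rnormInf α * (n * B) :=
  calc |∑ i, α i * y i| ≤ ∑ i, |α i * y i| := Finset.abs_sum_le_sum_abs _ _
    _ ≤ ∑ _i : Fin n, rnormInf α * B := Finset.sum_le_sum fun i _ => by
        rw [abs_mul]
        exact mul_le_mul (abs_le_rnormInf α i) (hy i) (abs_nonneg _) (rnormInf_nonneg α)
    _ = rnormInf α * (n * B) := by simp only [Finset.sum_const, Finset.card_univ,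
        Fintype.card_fin, nsmul_eq_mul]; ring

theorem mul_sqrt_mul_exp_neg_le {M N κ c : ℝ} (hM : 1 ≤ M) (hMN : M ^ 4 ≤ N)
    (hNc : log N ≤ κ * c) : M * √N * exp (-(κ * c)) ≤ exp (-(κ / 4 * c)) := by
  have hM0 : 0 < M := by linarith
  have hN0 : 0 < N := by linarith [one_le_pow₀ (n := 4) hM]
  have hlogM : 4 * log M ≤ log N := by
    simpa only [log_pow, Nat.cast_ofNat] using log_le_log (by positivity) hMN
  calc M * √N * exp (-(κ * c))
      = exp (log M + log N / 2 - κ * c) := by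
        rw [sub_eq_add_neg, exp_add, exp_add, exp_log hM0, ← log_sqrt hN0.le,
          exp_log (sqrt_pos.2 hN0)]
    _ ≤ exp (-(κ / 4 * c)) := exp_le_exp.2 (by linarith)

theorem stmt19_general
    (K : ℕ)
    (g : ℕ → ℝ → ℝ → ℝ) (C₀ κ : ℝ) (hC₀ : 0 < C₀) (hκ : 0 < κ)
    (hker : ∀ (fC : ℕ) (c : ℝ), 0 < c → c / (2*fC+1 : ℕ) < 1/2 →
      (∀ t : ℝ, c / (2*fC+1 : ℕ) ≤ t → t ≤ 1/2 →
        |g (2*fC+1) c t| ≤ C₀ * Real.exp (-(κ * c)) /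
          (Real.sqrt (2*fC+1 : ℕ) * Real.sin (Real.pi * t))) ∧
      (∀ t ∈ Set.Ico (0:ℝ) 1, g (2*fC+1) c t = g (2*fC+1) c (1 - t)))
    (τ : Fin K → ℝ)
    (α : Fin K → ℝ) :
    ∃ a b C C' C'' : ℝ, 0 < a ∧ a ≤ b ∧ 0 < C ∧ 0 < C' ∧ 0 < C'' ∧
      ∃ N₀ : ℕ, ∀ fC : ℕ, N₀ ≤ fC →
      ∀ c : ℝ, a * Real.log (2*fC+1 : ℕ) ≤ c → c ≤ b * Real.log (2*fC+1 : ℕ) →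
        c / (2*fC+1 : ℕ) < 1/2 →
        (∀ i j, i ≠ j → 2 * (c / (2*fC+1 : ℕ)) ≤ wrapDist (τ i) (τ j)) →
        ∀ t ∈ Set.Ico (0:ℝ) 1, (∀ i, c / (2*fC+1 : ℕ) ≤ wrapDist t (τ i)) →
          |∑ i, α i * g (2*fC+1) c (wrapSub t (τ i))|
              ≤ rnormInf α * (C * (2*fC+1 : ℕ) * Real.exp (-(C' * c))) ∧
          |∑ i, α i * g (2*fC+1) c (wrapSub t (τ i))|
              ≤ rnormInf α * Real.exp (-(C'' * c)) := by
  set M : ℝ := max 1 (K * C₀)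
  refine ⟨1 / κ, 1 / κ, M, κ, κ / 4, by positivity, le_rfl, by positivity, hκ, by positivity,
    ⌈exp κ + M ^ 4⌉₊, fun fC hfC c hca _ hσ _ t _ hfar => ?_⟩
  set N : ℝ := ((2 * fC + 1 : ℕ) : ℝ)
  have hN : exp κ + M ^ 4 ≤ N := (Nat.ceil_le.1 hfC).trans (by simp only [N]; push_cast; linarith)
  have hM4 : 1 ≤ M ^ 4 := one_le_pow₀ (le_max_left _ _)
  have hN1 : 1 ≤ N := by linarith [exp_pos κ]
  have hN0 : 0 < N := by positivity
  have hlogN : log N ≤ κ * c := by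
    rwa [one_div_mul_eq_div, div_le_iff₀' hκ] at hca
  have hc : 1 ≤ c := by
    have : κ ≤ log N := (le_log_iff_exp_le hN0).2 (by linarith)
    nlinarith
  obtain ⟨hdecay, hsymm⟩ := hker fC c (by linarith) hσ
  have hterm : ∀ i, |g (2 * fC + 1) c (wrapSub t (τ i))|
      ≤ C₀ * exp (-(κ * c)) / √N / (2 * (c / N)) := fun i =>
    abs_apply_wrapSub_le_of_symm (by positivity) (by positivity)
      (fun x h1 h2 => by simpa only [div_mul_eq_div_div] using hdecay x h1 h2) hsymm (hfar i)
  have hterms : K * (C₀ * exp (-(κ * c)) / √N / (2 * (c / N))) ≤ M * √N * exp (-(κ * c)) :=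
    calc K * (C₀ * exp (-(κ * c)) / √N / (2 * (c / N)))
        = K * C₀ * √N * exp (-(κ * c)) / (2 * c) := by
          field_simp
          rw [sq_sqrt hN0.le]
      _ ≤ K * C₀ * √N * exp (-(κ * c)) := div_le_self (by positivity) (by linarith)
      _ ≤ M * √N * exp (-(κ * c)) := by gcongr; exact le_max_right _ _
  have hsum := (abs_sum_mul_le_rnormInf_mul α _ hterm).trans
    (mul_le_mul_of_nonneg_left hterms (rnormInf_nonneg α))
  refine ⟨hsum.trans (mul_le_mul_of_nonneg_left ?_ (rnormInf_nonneg α)),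
    hsum.trans (mul_le_mul_of_nonneg_left ?_ (rnormInf_nonneg α))⟩
  · gcongr
    exact sqrt_le_self_iff.2 (Or.inr hN1)
  · exact mul_sqrt_mul_exp_neg_le (le_max_left _ _) (by linarith [exp_pos κ]) hlogN

/-- the filtered signal is small away from the impulses. -/
theorem stmt19
    (K : ℕ) (hK : 0 < K)
    (g : ℕ → ℝ → ℝ → ℝ) (C₀ κ : ℝ) (hC₀ : 0 < C₀) (hκ : 0 < κ)
    (hker : ∀ (fC : ℕ) (c : ℝ), 0 < c → c / (2*fC+1 : ℕ) < 1/2 →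
      (∀ t : ℝ, c / (2*fC+1 : ℕ) ≤ t → t ≤ 1/2 →
        |g (2*fC+1) c t| ≤ C₀ * Real.exp (-(κ * c)) /
          (Real.sqrt (2*fC+1 : ℕ) * Real.sin (Real.pi * t))) ∧
      (∀ t ∈ Set.Ico (0:ℝ) 1, g (2*fC+1) c t = g (2*fC+1) c (1 - t)))
    (τ : Fin K → ℝ) (hτ : ∀ i, τ i ∈ Set.Ico (0:ℝ) 1)
    (α : Fin K → ℝ) :
    ∃ a b C C' C'' : ℝ, 0 < a ∧ a ≤ b ∧ 0 < C ∧ 0 < C' ∧ 0 < C'' ∧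
      ∃ N₀ : ℕ, ∀ fC : ℕ, N₀ ≤ fC →
      ∀ c : ℝ, a * Real.log (2*fC+1 : ℕ) ≤ c → c ≤ b * Real.log (2*fC+1 : ℕ) →
        c / (2*fC+1 : ℕ) < 1/2 →
        (∀ i j, i ≠ j → 2 * (c / (2*fC+1 : ℕ)) ≤ wrapDist (τ i) (τ j)) →
        ∀ t ∈ Set.Ico (0:ℝ) 1, (∀ i, c / (2*fC+1 : ℕ) ≤ wrapDist t (τ i)) →
          |∑ i, α i * g (2*fC+1) c (wrapSub t (τ i))|
              ≤ rnormInf α * (C * (2*fC+1 : ℕ) * Real.exp (-(C' * c))) ∧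
          |∑ i, α i * g (2*fC+1) c (wrapSub t (τ i))|
              ≤ rnormInf α * Real.exp (-(C'' * c)) :=
  stmt19_general K g C₀ κ hC₀ hκ hker τ α
end
end
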